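/- arXiv:2104.14266 — 3 statements merged into one kernel-verified Lean document; each statement's English description precedes it below -/
import Mathlib

section
/- Let Γ be a finite set of MSO formulas, n ≥ 1, and φ₁,…,φₙ MSO formulas with Γ ⊨ ⋁_{m=1}^n φ_m. If for every m ∈ {1,…,n} the equation Γ∪{φ_m} ⊢ Φ₁ ≈ Φ₂ is derivable, then Γ ⊢ Φ₁ ≈ Φ₂ is derivable (for core-wMSO(?,+) formulas Φ₁, Φ₂). -/
namespace WMSO

/-- MSO formulas over alphabet `A`; first- and second-order variables are `ℕ`. -/
inductive MSO (A : Type) : Type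
  | top : MSO A
  | pred : A → ℕ → MSO A
  | le : ℕ → ℕ → MSO A
  | mem : ℕ → ℕ → MSO A
  | not : MSO A → MSO A
  | and : MSO A → MSO A → MSO A
  | allFO : ℕ → MSO A → MSO A
  | allSO : ℕ → MSO A → MSO A

/-- A nonempty word over `A` together with a valuation of first-order variables
(positions of the word) and second-order variables (sets of positions):
an element of `Σ⁺_val`. -/
structure WVal (A : Type) : Type where
  word : List A
  nonempty : word ≠ []
  fo : ℕ → Fin word.length
  so : ℕ → Finset (Fin word.length)

variable {A R : Type}

def WVal.updFO (m : WVal A) (x : ℕ) (i : Fin m.word.length) : WVal A :=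
  { m with fo := Function.update m.fo x i }

def WVal.updSO (m : WVal A) (X : ℕ) (I : Finset (Fin m.word.length)) : WVal A :=
  { m with so := Function.update m.so X I }

/-- Standard MSO satisfaction over pairs `(w,σ)`. -/
def MSO.Sat : MSO A → WVal A → Prop
  | .top, _ => True
  | .pred a x, m => m.word.get (m.fo x) = a
  | .le x y, m => (m.fo x : ℕ) ≤ (m.fo y : ℕ)
  | .mem x X, m => m.fo x ∈ m.so X
  | .not φ, m => ¬ φ.Sat m
  | .and φ ψ, m => φ.Sat m ∧ ψ.Sat m
  | .allFO x φ, m => ∀ i, φ.Sat (m.updFO x i)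
  | .allSO X φ, m => ∀ I, φ.Sat (m.updSO X I)

/-- `(w,σ)` satisfies every formula in `Γ`. -/
def SatAll (Γ : Set (MSO A)) (m : WVal A) : Prop := ∀ φ ∈ Γ, φ.Sat m

/-- Semantic entailment for MSO (which, by completeness of MSO over finite
words, coincides with derivability). -/
def Entails (Γ : Set (MSO A)) (φ : MSO A) : Prop := ∀ m : WVal A, SatAll Γ m → φ.Sat m

/-- Disjunction as a derived MSO connective. -/
def MSO.or (φ ψ : MSO A) : MSO A := .not (.and (.not φ) (.not ψ))

/-- `⋁` over a list of MSO formulas; the empty disjunction is `¬⊤`. -/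
def bigOr : List (MSO A) → MSO A
  | [] => .not .top
  | φ :: l => φ.or (bigOr l)

/-! ### Variable occurrences and renaming -/

/-- First-order variable `x` occurs free in an MSO formula. -/
def MSO.FreeFO (x : ℕ) : MSO A → Prop
  | .top => False
  | .pred _ z => z = x
  | .le z w => z = x ∨ w = x
  | .mem z _ => z = x
  | .not φ => φ.FreeFO x
  | .and φ ψ => φ.FreeFO x ∨ ψ.FreeFO x
  | .allFO z φ => z ≠ x ∧ φ.FreeFO x
  | .allSO _ φ => φ.FreeFO x

/-- Second-order variable `X` occurs free in an MSO formula. -/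
def MSO.FreeSO (X : ℕ) : MSO A → Prop
  | .top => False
  | .pred _ _ => False
  | .le _ _ => False
  | .mem _ Z => Z = X
  | .not φ => φ.FreeSO X
  | .and φ ψ => φ.FreeSO X ∨ ψ.FreeSO X
  | .allFO _ φ => φ.FreeSO X
  | .allSO Z φ => Z ≠ X ∧ φ.FreeSO X

/-- First-order variable `y` occurs (anywhere) in an MSO formula. -/
def MSO.OccFO (y : ℕ) : MSO A → Prop
  | .top => False
  | .pred _ z => z = y
  | .le z w => z = y ∨ w = y
  | .mem z _ => z = y
  | .not φ => φ.OccFO y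
  | .and φ ψ => φ.OccFO y ∨ ψ.OccFO y
  | .allFO z φ => z = y ∨ φ.OccFO y
  | .allSO _ φ => φ.OccFO y

/-- Second-order variable `Y` occurs (anywhere) in an MSO formula. -/
def MSO.OccSO (Y : ℕ) : MSO A → Prop
  | .top => False
  | .pred _ _ => False
  | .le _ _ => False
  | .mem _ Z => Z = Y
  | .not φ => φ.OccSO Y
  | .and φ ψ => φ.OccSO Y ∨ ψ.OccSO Y
  | .allFO _ φ => φ.OccSO Y
  | .allSO Z φ => Z = Y ∨ φ.OccSO Y

/-- Replace the variable `x` by `y`. -/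
def rn (x y z : ℕ) : ℕ := if z = x then y else z

/-- Replace the first-order variable `x` by `y` everywhere in an MSO formula. -/
def MSO.renFO (x y : ℕ) : MSO A → MSO A
  | .top => .top
  | .pred a z => .pred a (rn x y z)
  | .le z w => .le (rn x y z) (rn x y w)
  | .mem z X => .mem (rn x y z) X
  | .not φ => .not (φ.renFO x y)
  | .and φ ψ => .and (φ.renFO x y) (ψ.renFO x y)
  | .allFO z φ => .allFO (rn x y z) (φ.renFO x y)
  | .allSO X φ => .allSO X (φ.renFO x y)

/-- Replace the second-order variable `X` by `Y` everywhere in an MSO formula. -/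
def MSO.renSO (X Y : ℕ) : MSO A → MSO A
  | .top => .top
  | .pred a z => .pred a z
  | .le z w => .le z w
  | .mem z Z => .mem z (rn X Y Z)
  | .not φ => .not (φ.renSO X Y)
  | .and φ ψ => .and (φ.renSO X Y) (ψ.renSO X Y)
  | .allFO z φ => .allFO z (φ.renSO X Y)
  | .allSO Z φ => .allSO (rn X Y Z) (φ.renSO X Y)

/-! ### step-wMSO -/

/-- step-wMSO formulas: `Ψ ::= r | φ ? Ψ₁ : Ψ₂`. -/
inductive Step (A R : Type) : Type
  | const : R → Step A R
  | ite : MSO A → Step A R → Step A R → Step A R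

open Classical in
/-- Semantics of step-wMSO. -/
noncomputable def Step.sem : Step A R → WVal A → R
  | .const r, _ => r
  | .ite φ Ψ₁ Ψ₂, m => if φ.Sat m then Ψ₁.sem m else Ψ₂.sem m

/-- `Ψ₁ ∼_Γ Ψ₂` for step-wMSO. -/
def StepEquiv (Γ : Set (MSO A)) (Ψ₁ Ψ₂ : Step A R) : Prop :=
  ∀ m : WVal A, SatAll Γ m → Ψ₁.sem m = Ψ₂.sem m

/-- `y` occurs in a step-wMSO formula (as a first-order variable). -/
def Step.OccFO (y : ℕ) : Step A R → Prop
  | .const _ => False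
  | .ite φ Ψ₁ Ψ₂ => φ.OccFO y ∨ Ψ₁.OccFO y ∨ Ψ₂.OccFO y

/-- `Y` occurs in a step-wMSO formula (as a second-order variable). -/
def Step.OccSO (Y : ℕ) : Step A R → Prop
  | .const _ => False
  | .ite φ Ψ₁ Ψ₂ => φ.OccSO Y ∨ Ψ₁.OccSO Y ∨ Ψ₂.OccSO Y

/-- Replace the first-order variable `x` by `y` in a step-wMSO formula. -/
def Step.renFO (x y : ℕ) : Step A R → Step A R
  | .const r => .const r
  | .ite φ Ψ₁ Ψ₂ => .ite (φ.renFO x y) (Ψ₁.renFO x y) (Ψ₂.renFO x y)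

/-- Replace the second-order variable `X` by `Y` in a step-wMSO formula. -/
def Step.renSO (X Y : ℕ) : Step A R → Step A R
  | .const r => .const r
  | .ite φ Ψ₁ Ψ₂ => .ite (φ.renSO X Y) (Ψ₁.renSO X Y) (Ψ₂.renSO X Y)

/-- The set `R(Ψ)` of weights occurring in a step-wMSO formula. -/
def Step.weights [DecidableEq R] : Step A R → Finset R
  | .const r => {r}
  | .ite _ Ψ₁ Ψ₂ => Ψ₁.weights ∪ Ψ₂.weights

/-- The MSO formula `φ(Ψ,r)` characterizing `⟦Ψ⟧ = r`. -/
def phiOf [DecidableEq R] : Step A R → R → MSO A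
  | .const r', r => if r' = r then .top else .not .top
  | .ite φ' Ψ₁ Ψ₂, r => (MSO.and φ' (phiOf Ψ₁ r)).or (MSO.and (.not φ') (phiOf Ψ₂ r))

/-- The equational proof system for step-wMSO: equational logic
(refl, symm, trans, congruence for the conditional) plus axioms (S1)–(S4),
where the MSO side condition of (S3) is semantic entailment. -/
inductive StepDeriv : Set (MSO A) → Step A R → Step A R → Prop
  | refl (Γ : Set (MSO A)) (Ψ : Step A R) : StepDeriv Γ Ψ Ψ
  | symm {Γ Ψ₁ Ψ₂} : StepDeriv Γ Ψ₁ Ψ₂ → StepDeriv Γ Ψ₂ Ψ₁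
  | trans {Γ Ψ₁ Ψ₂ Ψ₃} : StepDeriv Γ Ψ₁ Ψ₂ → StepDeriv Γ Ψ₂ Ψ₃ → StepDeriv Γ Ψ₁ Ψ₃
  | congIte {Γ Ψ₁ Ψ₁' Ψ₂ Ψ₂'} (φ : MSO A) :
      StepDeriv Γ Ψ₁ Ψ₁' → StepDeriv Γ Ψ₂ Ψ₂' →
      StepDeriv Γ (.ite φ Ψ₁ Ψ₂) (.ite φ Ψ₁' Ψ₂')
  | s1 {Γ Ψ₁ Ψ₂} (φ : MSO A) : StepDeriv Γ Ψ₁ Ψ₂ → StepDeriv (insert φ Γ) Ψ₁ Ψ₂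
  | s2 (Γ : Set (MSO A)) (φ : MSO A) (Ψ₁ Ψ₂ : Step A R) :
      StepDeriv Γ (.ite (.not φ) Ψ₁ Ψ₂) (.ite φ Ψ₂ Ψ₁)
  | s3 {Γ : Set (MSO A)} {φ : MSO A} (Ψ₁ Ψ₂ : Step A R) :
      Entails Γ φ → StepDeriv Γ (.ite φ Ψ₁ Ψ₂) Ψ₁
  | s4 {Γ : Set (MSO A)} {φ : MSO A} {Ψ₁ Ψ₂ Ψ : Step A R} :
      StepDeriv (insert φ Γ) Ψ₁ Ψ → StepDeriv (insert (.not φ) Γ) Ψ₂ Ψ →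
      StepDeriv Γ (.ite φ Ψ₁ Ψ₂) Ψ

/-! ### core-wMSO -/

/-- core-wMSO formulas. -/
inductive Core (A R : Type) : Type
  | zero : Core A R
  | prod : ℕ → Step A R → Core A R
  | ite : MSO A → Core A R → Core A R → Core A R
  | add : Core A R → Core A R → Core A R
  | sumFO : ℕ → Core A R → Core A R
  | sumSO : ℕ → Core A R → Core A R

open Classical in
/-- Abstract semantics of core-wMSO, valued in finite multisets of words over `R`. -/
noncomputable def Core.sem : Core A R → WVal A → Multiset (List R)
  | .zero, _ => 0
  | .prod x Ψ, m => {List.ofFn (fun i : Fin m.word.length => Ψ.sem (m.updFO x i))}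
  | .ite φ Φ₁ Φ₂, m => if φ.Sat m then Φ₁.sem m else Φ₂.sem m
  | .add Φ₁ Φ₂, m => Φ₁.sem m + Φ₂.sem m
  | .sumFO x Φ, m => ∑ i : Fin m.word.length, Φ.sem (m.updFO x i)
  | .sumSO X Φ, m => ∑ I : Finset (Fin m.word.length), Φ.sem (m.updSO X I)

/-- `Φ₁ ∼_Γ Φ₂` for core-wMSO. -/
def CoreEquiv (Γ : Set (MSO A)) (Φ₁ Φ₂ : Core A R) : Prop :=
  ∀ m : WVal A, SatAll Γ m → Φ₁.sem m = Φ₂.sem m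

/-- The set of weights occurring in a core-wMSO formula. -/
def Core.weights [DecidableEq R] : Core A R → Finset R
  | .zero => ∅
  | .prod _ Ψ => Ψ.weights
  | .ite _ Φ₁ Φ₂ => Φ₁.weights ∪ Φ₂.weights
  | .add Φ₁ Φ₂ => Φ₁.weights ∪ Φ₂.weights
  | .sumFO _ Φ => Φ.weights
  | .sumSO _ Φ => Φ.weights

/-- `y` occurs in a core-wMSO formula as a first-order variable. -/
def Core.OccFO (y : ℕ) : Core A R → Prop
  | .zero => False
  | .prod z Ψ => z = y ∨ Ψ.OccFO y
  | .ite φ Φ₁ Φ₂ => φ.OccFO y ∨ Φ₁.OccFO y ∨ Φ₂.OccFO y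
  | .add Φ₁ Φ₂ => Φ₁.OccFO y ∨ Φ₂.OccFO y
  | .sumFO z Φ => z = y ∨ Φ.OccFO y
  | .sumSO _ Φ => Φ.OccFO y

/-- `Y` occurs in a core-wMSO formula as a second-order variable. -/
def Core.OccSO (Y : ℕ) : Core A R → Prop
  | .zero => False
  | .prod _ Ψ => Ψ.OccSO Y
  | .ite φ Φ₁ Φ₂ => φ.OccSO Y ∨ Φ₁.OccSO Y ∨ Φ₂.OccSO Y
  | .add Φ₁ Φ₂ => Φ₁.OccSO Y ∨ Φ₂.OccSO Y
  | .sumFO _ Φ => Φ.OccSO Y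
  | .sumSO Z Φ => Z = Y ∨ Φ.OccSO Y

/-- Replace the first-order variable `x` by `y` in a core-wMSO formula. -/
def Core.renFO (x y : ℕ) : Core A R → Core A R
  | .zero => .zero
  | .prod z Ψ => .prod (rn x y z) (Ψ.renFO x y)
  | .ite φ Φ₁ Φ₂ => .ite (φ.renFO x y) (Φ₁.renFO x y) (Φ₂.renFO x y)
  | .add Φ₁ Φ₂ => .add (Φ₁.renFO x y) (Φ₂.renFO x y)
  | .sumFO z Φ => .sumFO (rn x y z) (Φ.renFO x y)
  | .sumSO Z Φ => .sumSO Z (Φ.renFO x y)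

/-- Replace the second-order variable `X` by `Y` in a core-wMSO formula. -/
def Core.renSO (X Y : ℕ) : Core A R → Core A R
  | .zero => .zero
  | .prod z Ψ => .prod z (Ψ.renSO X Y)
  | .ite φ Φ₁ Φ₂ => .ite (φ.renSO X Y) (Φ₁.renSO X Y) (Φ₂.renSO X Y)
  | .add Φ₁ Φ₂ => .add (Φ₁.renSO X Y) (Φ₂.renSO X Y)
  | .sumFO z Φ => .sumFO z (Φ.renSO X Y)
  | .sumSO Z Φ => .sumSO (rn X Y Z) (Φ.renSO X Y)

/-- core-wMSO formulas with no occurrence of the binary sum `+`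
(second normal form). -/
def Core.noAdd : Core A R → Prop
  | .zero => True
  | .prod _ _ => True
  | .ite _ Φ₁ Φ₂ => Φ₁.noAdd ∧ Φ₂.noAdd
  | .add _ _ => False
  | .sumFO _ Φ => Φ.noAdd
  | .sumSO _ Φ => Φ.noAdd

/-! ### The fragment core-wMSO(?,+) -/

/-- core-wMSO(?,+) formulas: `Φ ::= 𝟬 | ∏_x Ψ | φ ? Φ₁ : Φ₂ | Φ₁ + Φ₂`. -/
inductive CoreP (A R : Type) : Type
  | zero : CoreP A R
  | prod : ℕ → Step A R → CoreP A R
  | ite : MSO A → CoreP A R → CoreP A R → CoreP A R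
  | add : CoreP A R → CoreP A R → CoreP A R

open Classical in
/-- Abstract semantics of core-wMSO(?,+). -/
noncomputable def CoreP.sem : CoreP A R → WVal A → Multiset (List R)
  | .zero, _ => 0
  | .prod x Ψ, m => {List.ofFn (fun i : Fin m.word.length => Ψ.sem (m.updFO x i))}
  | .ite φ Φ₁ Φ₂, m => if φ.Sat m then Φ₁.sem m else Φ₂.sem m
  | .add Φ₁ Φ₂, m => Φ₁.sem m + Φ₂.sem m

/-- `Φ₁ ∼_Γ Φ₂` for core-wMSO(?,+). -/
def CorePEquiv (Γ : Set (MSO A)) (Φ₁ Φ₂ : CoreP A R) : Prop :=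
  ∀ m : WVal A, SatAll Γ m → Φ₁.sem m = Φ₂.sem m

/-- `y` occurs in a core-wMSO(?,+) formula as a first-order variable. -/
def CoreP.OccFO (y : ℕ) : CoreP A R → Prop
  | .zero => False
  | .prod z Ψ => z = y ∨ Ψ.OccFO y
  | .ite φ Φ₁ Φ₂ => φ.OccFO y ∨ Φ₁.OccFO y ∨ Φ₂.OccFO y
  | .add Φ₁ Φ₂ => Φ₁.OccFO y ∨ Φ₂.OccFO y

/-- The equational proof system for core-wMSO(?,+): equational logic
(refl, symm, trans, congruence for `?` and `+`) plus axioms (C1)–(C10),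
where MSO side conditions are semantic entailment. -/
inductive CorePDeriv : Set (MSO A) → CoreP A R → CoreP A R → Prop
  | refl (Γ : Set (MSO A)) (Φ : CoreP A R) : CorePDeriv Γ Φ Φ
  | symm {Γ Φ₁ Φ₂} : CorePDeriv Γ Φ₁ Φ₂ → CorePDeriv Γ Φ₂ Φ₁
  | trans {Γ Φ₁ Φ₂ Φ₃} : CorePDeriv Γ Φ₁ Φ₂ → CorePDeriv Γ Φ₂ Φ₃ → CorePDeriv Γ Φ₁ Φ₃
  | congIte {Γ Φ₁ Φ₁' Φ₂ Φ₂'} (φ : MSO A) :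
      CorePDeriv Γ Φ₁ Φ₁' → CorePDeriv Γ Φ₂ Φ₂' →
      CorePDeriv Γ (.ite φ Φ₁ Φ₂) (.ite φ Φ₁' Φ₂')
  | congAdd {Γ Φ₁ Φ₁' Φ₂ Φ₂'} :
      CorePDeriv Γ Φ₁ Φ₁' → CorePDeriv Γ Φ₂ Φ₂' →
      CorePDeriv Γ (.add Φ₁ Φ₂) (.add Φ₁' Φ₂')
  | c1 (Γ : Set (MSO A)) (Φ : CoreP A R) : CorePDeriv Γ (Φ.add .zero) Φ
  | c2 (Γ : Set (MSO A)) (Φ₁ Φ₂ : CoreP A R) : CorePDeriv Γ (Φ₁.add Φ₂) (Φ₂.add Φ₁)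
  | c3 (Γ : Set (MSO A)) (Φ₁ Φ₂ Φ₃ : CoreP A R) :
      CorePDeriv Γ ((Φ₁.add Φ₂).add Φ₃) (Φ₁.add (Φ₂.add Φ₃))
  | c4 {Γ : Set (MSO A)} {Ψ₁ Ψ₂ : Step A R} (x : ℕ) :
      (∀ ψ ∈ Γ, ¬ ψ.FreeFO x) → StepDeriv Γ Ψ₁ Ψ₂ →
      CorePDeriv Γ (.prod x Ψ₁) (.prod x Ψ₂)
  | c5 (Γ : Set (MSO A)) (x y : ℕ) (Ψ : Step A R) :
      ¬ Ψ.OccFO y → CorePDeriv Γ (.prod x Ψ) (.prod y (Ψ.renFO x y))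
  | c6 {Γ Φ₁ Φ₂} (φ : MSO A) : CorePDeriv Γ Φ₁ Φ₂ → CorePDeriv (insert φ Γ) Φ₁ Φ₂
  | c7 (Γ : Set (MSO A)) (φ : MSO A) (Φ₁ Φ₂ : CoreP A R) :
      CorePDeriv Γ (.ite (.not φ) Φ₁ Φ₂) (.ite φ Φ₂ Φ₁)
  | c8 {Γ : Set (MSO A)} {φ : MSO A} (Φ₁ Φ₂ : CoreP A R) :
      Entails Γ φ → CorePDeriv Γ (.ite φ Φ₁ Φ₂) Φ₁
  | c9 {Γ : Set (MSO A)} {φ : MSO A} {Φ₁ Φ₂ Φ : CoreP A R} :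
      CorePDeriv (insert φ Γ) Φ₁ Φ → CorePDeriv (insert (.not φ) Γ) Φ₂ Φ →
      CorePDeriv Γ (.ite φ Φ₁ Φ₂) Φ
  | c10 (Γ : Set (MSO A)) (φ : MSO A) (Φ' Φ'' Φ : CoreP A R) :
      CorePDeriv Γ ((CoreP.ite φ Φ' Φ'').add Φ) (.ite φ (Φ'.add Φ) (Φ''.add Φ))

/-- Normal-form `M`-layer: `M ::= ∏_x Ψ | M₁ + M₂`. -/
inductive IsM : CoreP A R → Prop
  | prod (x : ℕ) (Ψ : Step A R) : IsM (.prod x Ψ)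
  | add {M₁ M₂ : CoreP A R} : IsM M₁ → IsM M₂ → IsM (M₁.add M₂)

/-- Normal form for core-wMSO(?,+): `N ::= φ ? N₁ : N₂ | M | 𝟬`. -/
inductive IsNF : CoreP A R → Prop
  | zero : IsNF .zero
  | ofM {M : CoreP A R} : IsM M → IsNF M
  | ite {N₁ N₂ : CoreP A R} (φ : MSO A) : IsNF N₁ → IsNF N₂ → IsNF (.ite φ N₁ N₂)

/-- The finite sum `∑_{i=1}^k ∏_x Ψ_i` of products. -/
def sumProds (x : ℕ) (L : List (Step A R)) : CoreP A R :=
  (L.map (CoreP.prod x)).foldr CoreP.add CoreP.zero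

/-! ### The full core-wMSO proof system -/

/-- `Σ_{X⃗}` for a sequence of second-order variables. -/
def bigSumSO (Xs : List ℕ) (Φ : Core A R) : Core A R := Xs.foldr Core.sumSO Φ

/-- The equational proof system for full core-wMSO: equational logic plus
axioms (C1)–(C16) together with the first-order analogues of (C11)–(C16);
MSO side conditions are read semantically. -/
inductive CoreDeriv : Set (MSO A) → Core A R → Core A R → Prop
  | refl (Γ : Set (MSO A)) (Φ : Core A R) : CoreDeriv Γ Φ Φ
  | symm {Γ Φ₁ Φ₂} : CoreDeriv Γ Φ₁ Φ₂ → CoreDeriv Γ Φ₂ Φ₁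
  | trans {Γ Φ₁ Φ₂ Φ₃} : CoreDeriv Γ Φ₁ Φ₂ → CoreDeriv Γ Φ₂ Φ₃ → CoreDeriv Γ Φ₁ Φ₃
  | congIte {Γ Φ₁ Φ₁' Φ₂ Φ₂'} (φ : MSO A) :
      CoreDeriv Γ Φ₁ Φ₁' → CoreDeriv Γ Φ₂ Φ₂' →
      CoreDeriv Γ (.ite φ Φ₁ Φ₂) (.ite φ Φ₁' Φ₂')
  | congAdd {Γ Φ₁ Φ₁' Φ₂ Φ₂'} :
      CoreDeriv Γ Φ₁ Φ₁' → CoreDeriv Γ Φ₂ Φ₂' →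
      CoreDeriv Γ (.add Φ₁ Φ₂) (.add Φ₁' Φ₂')
  | c1 (Γ : Set (MSO A)) (Φ : Core A R) : CoreDeriv Γ (Φ.add .zero) Φ
  | c2 (Γ : Set (MSO A)) (Φ₁ Φ₂ : Core A R) : CoreDeriv Γ (Φ₁.add Φ₂) (Φ₂.add Φ₁)
  | c3 (Γ : Set (MSO A)) (Φ₁ Φ₂ Φ₃ : Core A R) :
      CoreDeriv Γ ((Φ₁.add Φ₂).add Φ₃) (Φ₁.add (Φ₂.add Φ₃))
  | c4 {Γ : Set (MSO A)} {Ψ₁ Ψ₂ : Step A R} (x : ℕ) :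
      (∀ ψ ∈ Γ, ¬ ψ.FreeFO x) → StepDeriv Γ Ψ₁ Ψ₂ →
      CoreDeriv Γ (.prod x Ψ₁) (.prod x Ψ₂)
  | c5 (Γ : Set (MSO A)) (x y : ℕ) (Ψ : Step A R) :
      ¬ Ψ.OccFO y → CoreDeriv Γ (.prod x Ψ) (.prod y (Ψ.renFO x y))
  | c6 {Γ Φ₁ Φ₂} (φ : MSO A) : CoreDeriv Γ Φ₁ Φ₂ → CoreDeriv (insert φ Γ) Φ₁ Φ₂
  | c7 (Γ : Set (MSO A)) (φ : MSO A) (Φ₁ Φ₂ : Core A R) :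
      CoreDeriv Γ (.ite (.not φ) Φ₁ Φ₂) (.ite φ Φ₂ Φ₁)
  | c8 {Γ : Set (MSO A)} {φ : MSO A} (Φ₁ Φ₂ : Core A R) :
      Entails Γ φ → CoreDeriv Γ (.ite φ Φ₁ Φ₂) Φ₁
  | c9 {Γ : Set (MSO A)} {φ : MSO A} {Φ₁ Φ₂ Φ : Core A R} :
      CoreDeriv (insert φ Γ) Φ₁ Φ → CoreDeriv (insert (.not φ) Γ) Φ₂ Φ →
      CoreDeriv Γ (.ite φ Φ₁ Φ₂) Φ
  | c10 (Γ : Set (MSO A)) (φ : MSO A) (Φ' Φ'' Φ : Core A R) :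
      CoreDeriv Γ ((Core.ite φ Φ' Φ'').add Φ) (.ite φ (Φ'.add Φ) (Φ''.add Φ))
  | c11 {Γ : Set (MSO A)} {Φ₁ Φ₂ : Core A R} (X : ℕ) :
      (∀ ψ ∈ Γ, ¬ ψ.FreeSO X) → CoreDeriv Γ Φ₁ Φ₂ →
      CoreDeriv Γ (.sumSO X Φ₁) (.sumSO X Φ₂)
  | c11fo {Γ : Set (MSO A)} {Φ₁ Φ₂ : Core A R} (x : ℕ) :
      (∀ ψ ∈ Γ, ¬ ψ.FreeFO x) → CoreDeriv Γ Φ₁ Φ₂ →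
      CoreDeriv Γ (.sumFO x Φ₁) (.sumFO x Φ₂)
  | c12 (Γ : Set (MSO A)) (X Y : ℕ) (Φ : Core A R) :
      ¬ Φ.OccSO Y → CoreDeriv Γ (.sumSO X Φ) (.sumSO Y (Φ.renSO X Y))
  | c12fo (Γ : Set (MSO A)) (x y : ℕ) (Φ : Core A R) :
      ¬ Φ.OccFO y → CoreDeriv Γ (.sumFO x Φ) (.sumFO y (Φ.renFO x y))
  | c13 (Γ : Set (MSO A)) (X Y : ℕ) (Φ : Core A R) :
      CoreDeriv Γ (.sumSO X (.sumSO Y Φ)) (.sumSO Y (.sumSO X Φ))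
  | c13fo (Γ : Set (MSO A)) (x y : ℕ) (Φ : Core A R) :
      CoreDeriv Γ (.sumFO x (.sumFO y Φ)) (.sumFO y (.sumFO x Φ))
  | c14 (Γ : Set (MSO A)) (X : ℕ) (Φ₁ Φ₂ : Core A R) :
      CoreDeriv Γ (.sumSO X (Φ₁.add Φ₂)) ((Core.sumSO X Φ₁).add (.sumSO X Φ₂))
  | c14fo (Γ : Set (MSO A)) (x : ℕ) (Φ₁ Φ₂ : Core A R) :
      CoreDeriv Γ (.sumFO x (Φ₁.add Φ₂)) ((Core.sumFO x Φ₁).add (.sumFO x Φ₂))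
  | c15 (Γ : Set (MSO A)) (X : ℕ) (φ : MSO A) (Φ₁ Φ₂ : Core A R) :
      ¬ φ.FreeSO X →
      CoreDeriv Γ (.ite φ (.sumSO X Φ₁) (.sumSO X Φ₂)) (.sumSO X (.ite φ Φ₁ Φ₂))
  | c15fo (Γ : Set (MSO A)) (x : ℕ) (φ : MSO A) (Φ₁ Φ₂ : Core A R) :
      ¬ φ.FreeFO x →
      CoreDeriv Γ (.ite φ (.sumFO x Φ₁) (.sumFO x Φ₂)) (.sumFO x (.ite φ Φ₁ Φ₂))
  | c16 (Γ : Set (MSO A)) (X : ℕ) (φ : MSO A) (Φ : Core A R) :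
      (∀ m : WVal A, SatAll Γ m → ∃! I : Finset (Fin m.word.length), φ.Sat (m.updSO X I)) →
      ¬ Φ.OccSO X → CoreDeriv Γ Φ (.sumSO X (.ite φ Φ .zero))
  | c16fo (Γ : Set (MSO A)) (x : ℕ) (φ : MSO A) (Φ : Core A R) :
      (∀ m : WVal A, SatAll Γ m → ∃! i : Fin m.word.length, φ.Sat (m.updFO x i)) →
      ¬ Φ.OccFO x → CoreDeriv Γ Φ (.sumFO x (.ite φ Φ .zero))

/-! ### Weighted automata -/

/-- An `R`-weighted automaton over `A` with state type `Q`
(transition relation `delta`, weight function `wgt`, initial states `start`,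
final states `final`). -/
structure WA (A R Q : Type) where
  delta : Q → A → Q → Prop
  wgt : Q → A → Q → R
  start : Set Q
  final : Set Q

/-- A run of the automaton on `w`, described by its sequence of states, is
accepting if it starts in an initial state, ends in a final state, and each
step is a transition. -/
def WA.IsAccRun {Q : Type} (M : WA A R Q) (w : List A) (qs : Fin (w.length + 1) → Q) : Prop :=
  qs 0 ∈ M.start ∧ qs (Fin.last w.length) ∈ M.final ∧
    ∀ i : Fin w.length, M.delta (qs i.castSucc) (w.get i) (qs i.succ)

/-- The weight of a run: the word of the weights of its transitions. -/
def WA.runWeight {Q : Type} (M : WA A R Q) (w : List A) (qs : Fin (w.length + 1) → Q) : List R :=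
  List.ofFn fun i : Fin w.length => M.wgt (qs i.castSucc) (w.get i) (qs i.succ)

open Classical in
/-- The abstract semantics of a weighted automaton: the multiset of the
weights of its accepting runs on `w`. -/
noncomputable def WA.sem {Q : Type} [Fintype Q] [DecidableEq Q] (M : WA A R Q)
    (w : List A) : Multiset (List R) :=
  ((Finset.univ.filter (M.IsAccRun w)).val).map (M.runWeight w)

/-- From an inconsistent `Γ` any equation is derivable. -/
theorem corePDeriv_of_inconsistent {A R : Type} {Γ : Set (MSO A)}
    (hinc : Entails Γ (MSO.not .top)) (Φ₁ Φ₂ : CoreP A R) :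
    CorePDeriv Γ Φ₁ Φ₂ := by
  have h1 : Entails Γ (.top) := fun m _ => trivial
  exact .trans (.symm (.c8 Φ₁ Φ₂ h1))
    (.trans (.symm (.c7 Γ .top Φ₂ Φ₁)) (.c8 Φ₂ Φ₁ hinc))

theorem sat_or_iff {A : Type} (φ ψ : MSO A) (m : WVal A) :
    (φ.or ψ).Sat m ↔ φ.Sat m ∨ ψ.Sat m := by
  simp [MSO.or, MSO.Sat]; tauto

/-- Let `Γ` be finite, `n ≥ 1`, and `φ₁,…,φₙ` MSO formulas
with `Γ ⊨ ⋁_m φ_m`. If `Γ∪{φ_m} ⊢ Φ₁ ≈ Φ₂` is derivable for every `m`, then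
`Γ ⊢ Φ₁ ≈ Φ₂` is derivable. -/
theorem statement13 {A R : Type} [Fintype A] (Γ : Set (MSO A)) (hfin : Γ.Finite)
    (l : List (MSO A)) (hl : l ≠ []) (hent : Entails Γ (bigOr l))
    (Φ₁ Φ₂ : CoreP A R)
    (h : ∀ φ ∈ l, CorePDeriv (insert φ Γ) Φ₁ Φ₂) :
    CorePDeriv Γ Φ₁ Φ₂ := by
  clear hl hfin
  induction l generalizing Γ with
  | nil => exact corePDeriv_of_inconsistent hent Φ₁ Φ₂
  | cons φ l ih =>
    have hφ : CorePDeriv (insert φ Γ) Φ₁ Φ₂ := h φ (by simp)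
    have hrest : CorePDeriv (insert (MSO.not φ) Γ) Φ₁ Φ₂ := by
      apply ih
      · intro m hm
        have hφm : (MSO.not φ).Sat m := hm _ (Set.mem_insert _ _)
        have hΓ : SatAll Γ m := fun ψ hψ => hm ψ (Set.mem_insert_of_mem _ hψ)
        have := (sat_or_iff φ (bigOr l) m).mp (hent m hΓ)
        rcases this with h1 | h2
        · exact absurd h1 hφm
        · exact h2
      · intro ψ hψ
        rw [Set.insert_comm]
        exact .c6 _ (h ψ (List.mem_cons_of_mem _ hψ))
    have e0 : CorePDeriv Γ (.ite φ Φ₁ Φ₁) Φ₁ := .c9 (.refl _ _) (.refl _ _)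
    have e1 : CorePDeriv Γ (.ite φ Φ₁ Φ₁) Φ₂ := .c9 hφ hrest
    exact .trans (.symm e0) e1

end WMSO
end

section
/- Let Γ be a finite set of MSO formulas, and let Φ₁ = ∑_{i=1}^k ∏_x Ψ_i and Φ₂ = ∑_{j=1}^k ∏_x Ψ'_j be core-wMSO(?,+) formulas (finite sums formed with +) with Φ₁ ∼_Γ Φ₂. Assume that for all i and j, ∏_x Ψ_i ∼_Γ ∏_x Ψ'_j implies that Γ ⊢ ∏_x Ψ_i ≈ ∏_x Ψ'_j is derivable. Then Γ ⊢ Φ₁ ≈ Φ₂ is derivable. -/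
namespace WMSO

variable {A R : Type}

/-! ### Auxiliary development for Statement 14 -/

section Aux

variable {A R : Type}

lemma satAll_mono {Γ : Set (MSO A)} {φ : MSO A} {m : WVal A}
    (h : SatAll (insert φ Γ) m) : SatAll Γ m :=
  fun ψ hψ => h ψ (Set.mem_insert_of_mem _ hψ)

lemma satAll_insert_head {Γ : Set (MSO A)} {φ : MSO A} {m : WVal A}
    (h : SatAll (insert φ Γ) m) : φ.Sat m := h φ (Set.mem_insert _ _)

lemma StepDeriv.inconsistent {Γ : Set (MSO A)} (h : ∀ m : WVal A, ¬ SatAll Γ m)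
    (Ψ₁ Ψ₂ : Step A R) : StepDeriv Γ Ψ₁ Ψ₂ := by
  have e1 : Entails Γ (MSO.not (.top) : MSO A) := fun m hm => absurd hm (h m)
  have e2 : Entails Γ (.top : MSO A) := fun m _ => trivial
  exact .trans (.symm (.s3 Ψ₁ Ψ₂ e1)) (.trans (.s2 Γ .top Ψ₁ Ψ₂) (.s3 Ψ₂ Ψ₁ e2))

lemma CorePDeriv.inconsistent {Γ : Set (MSO A)} (h : ∀ m : WVal A, ¬ SatAll Γ m)
    (Φ₁ Φ₂ : CoreP A R) : CorePDeriv Γ Φ₁ Φ₂ := by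
  have e1 : Entails Γ (MSO.not (.top) : MSO A) := fun m hm => absurd hm (h m)
  have e2 : Entails Γ (.top : MSO A) := fun m _ => trivial
  exact .trans (.symm (.c8 Φ₁ Φ₂ e1)) (.trans (.c7 Γ .top Φ₁ Φ₂) (.c8 Φ₂ Φ₁ e2))

lemma CorePDeriv.split {Γ : Set (MSO A)} (ψ : MSO A) {Φ₁ Φ₂ : CoreP A R}
    (h1 : CorePDeriv (insert ψ Γ) Φ₁ Φ₂) (h2 : CorePDeriv (insert (.not ψ) Γ) Φ₁ Φ₂) :
    CorePDeriv Γ Φ₁ Φ₂ :=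
  .trans (.symm (.c9 (.refl _ _) (.refl _ _))) (.c9 h1 h2)

/-- Completeness of the step-wMSO proof system. -/
theorem stepComplete : ∀ (Ψ₁ : Step A R) (Γ : Set (MSO A)) (Ψ₂ : Step A R),
    StepEquiv Γ Ψ₁ Ψ₂ → StepDeriv Γ Ψ₁ Ψ₂ := by
  intro Ψ₁
  induction Ψ₁ with
  | const r =>
    intro Γ Ψ₂
    induction Ψ₂ generalizing Γ with
    | const r' =>
      intro h
      by_cases hc : ∃ m : WVal A, SatAll Γ m
      · obtain ⟨m, hm⟩ := hc
        have hr : r = r' := h m hm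
        subst hr
        exact .refl _ _
      · exact StepDeriv.inconsistent (fun m hm => hc ⟨m, hm⟩) _ _
    | ite φ a b iha ihb =>
      intro h
      refine .symm (.s4 (.symm (iha _ ?_)) (.symm (ihb _ ?_)))
      · intro m hm
        have hφ : φ.Sat m := satAll_insert_head hm
        have := h m (satAll_mono hm)
        simp only [Step.sem, if_pos hφ] at this
        exact this
      · intro m hm
        have hφ : ¬ φ.Sat m := satAll_insert_head hm
        have := h m (satAll_mono hm)
        simp only [Step.sem, if_neg hφ] at this
        exact this
  | ite φ a b iha ihb =>
    intro Γ Ψ₂ h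
    refine .s4 (iha _ _ ?_) (ihb _ _ ?_)
    · intro m hm
      have hφ : φ.Sat m := satAll_insert_head hm
      have := h m (satAll_mono hm)
      simp only [Step.sem, if_pos hφ] at this
      exact this
    · intro m hm
      have hφ : ¬ φ.Sat m := satAll_insert_head hm
      have := h m (satAll_mono hm)
      simp only [Step.sem, if_neg hφ] at this
      exact this

lemma MSO.or_sat {φ ψ : MSO A} {m : WVal A} : (φ.or ψ).Sat m ↔ φ.Sat m ∨ ψ.Sat m := by
  simp only [MSO.or, MSO.Sat]
  tauto

lemma bigOr_sat (l : List (MSO A)) (m : WVal A) :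
    (bigOr l).Sat m ↔ ∃ φ ∈ l, φ.Sat m := by
  induction l with
  | nil => simp [bigOr, MSO.Sat]
  | cons φ l ih => simp [bigOr, MSO.or_sat, ih]

lemma Step.sem_mem_weights [DecidableEq R] (Ψ : Step A R) (m : WVal A) :
    Ψ.sem m ∈ Ψ.weights := by
  induction Ψ with
  | const r => simp [Step.sem, Step.weights]
  | ite φ a b iha ihb =>
    simp only [Step.sem, Step.weights, Finset.mem_union]
    by_cases h : φ.Sat m
    · rw [if_pos h]; exact Or.inl iha
    · rw [if_neg h]; exact Or.inr ihb

lemma phiOf_sat [DecidableEq R] : ∀ (Ψ : Step A R) (r : R) (m : WVal A),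
    (phiOf Ψ r).Sat m ↔ Ψ.sem m = r := by
  intro Ψ
  induction Ψ with
  | const r' => intro r m; by_cases h : r' = r <;> simp [phiOf, h, MSO.Sat, Step.sem]
  | ite φ a b iha ihb =>
    intro r m
    simp only [phiOf, MSO.or_sat, MSO.Sat, Step.sem, iha, ihb]
    by_cases h : φ.Sat m <;> simp [h]

/-- The MSO formula expressing `⟦∏_y Ψ⟧ = ⟦∏_y Ψ'⟧`. -/
noncomputable def psiEq [DecidableEq R] (y : ℕ) (Ψ Ψ' : Step A R) : MSO A :=
  .allFO y (bigOr (((Ψ.weights ∪ Ψ'.weights).toList).map fun r =>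
    .and (phiOf Ψ r) (phiOf Ψ' r)))

lemma psiEq_sat [DecidableEq R] (y : ℕ) (Ψ Ψ' : Step A R) (m : WVal A) :
    (psiEq y Ψ Ψ').Sat m ↔ ∀ i, Ψ.sem (m.updFO y i) = Ψ'.sem (m.updFO y i) := by
  show (∀ i, (bigOr _).Sat (m.updFO y i)) ↔ _
  refine forall_congr' fun i => ?_
  rw [bigOr_sat]
  constructor
  · rintro ⟨χ, hχ, hsat⟩
    rw [List.mem_map] at hχ
    obtain ⟨r, _, rfl⟩ := hχ
    obtain ⟨h1, h2⟩ : (phiOf Ψ r).Sat _ ∧ (phiOf Ψ' r).Sat _ := hsat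
    rw [phiOf_sat] at h1 h2
    rw [h1, h2]
  · intro h
    refine ⟨_, List.mem_map.mpr ⟨Ψ.sem (m.updFO y i), ?_, rfl⟩, ?_⟩
    · rw [Finset.mem_toList, Finset.mem_union]
      exact Or.inl (Step.sem_mem_weights _ _)
    · exact ⟨(phiOf_sat _ _ _).mpr rfl, (phiOf_sat _ _ _).mpr h.symm⟩

lemma psiEq_not_free [DecidableEq R] (y : ℕ) (Ψ Ψ' : Step A R) :
    ¬ (psiEq y Ψ Ψ' : MSO A).FreeFO y := by
  simp [psiEq, MSO.FreeFO]

lemma prod_sem_eq_iff (y : ℕ) (Ψ Ψ' : Step A R) (m : WVal A) :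
    (CoreP.prod y Ψ).sem m = (CoreP.prod y Ψ').sem m ↔
      ∀ i, Ψ.sem (m.updFO y i) = Ψ'.sem (m.updFO y i) := by
  simp only [CoreP.sem, Multiset.singleton_inj, List.ofFn_inj, funext_iff]

lemma WVal.updFO_self (m : WVal A) (x : ℕ) : m.updFO x (m.fo x) = m := by
  cases m
  simp [WVal.updFO, Function.update_eq_self]

lemma sumProds_nil (x : ℕ) : (sumProds x ([] : List (Step A R))) = .zero := rfl

lemma sumProds_cons (x : ℕ) (a : Step A R) (L : List (Step A R)) :
    sumProds x (a :: L) = (CoreP.prod x a).add (sumProds x L) := rfl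

lemma sumProds_sem (y : ℕ) (K : List (Step A R)) (m : WVal A) :
    (sumProds y K).sem m
      = ↑(K.map fun Ψ => List.ofFn fun i => Ψ.sem (m.updFO y i)) := by
  induction K with
  | nil => rfl
  | cons a K ih =>
    rw [sumProds_cons, List.map_cons]
    show (CoreP.prod y a).sem m + (sumProds y K).sem m = _
    rw [ih]
    simp only [CoreP.sem]
    rw [← Multiset.cons_coe, ← Multiset.singleton_add]

/-- The equivalence of `∏_y Ψ` and `∏_y Ψ'` is determined by `Γ`. -/
def Det (y : ℕ) (Γ : Set (MSO A)) (Ψ Ψ' : Step A R) : Prop :=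
  (∀ m : WVal A, SatAll Γ m → (CoreP.prod y Ψ).sem m = (CoreP.prod y Ψ').sem m) ∨
  (∀ m : WVal A, SatAll Γ m → (CoreP.prod y Ψ).sem m ≠ (CoreP.prod y Ψ').sem m)

lemma Det.insert {y : ℕ} {Γ : Set (MSO A)} {φ : MSO A} {Ψ Ψ' : Step A R}
    (h : Det y Γ Ψ Ψ') : Det y (insert φ Γ) Ψ Ψ' :=
  h.imp (fun h m hm => h m (satAll_mono hm)) (fun h m hm => h m (satAll_mono hm))

lemma prodDeriv (y : ℕ) {Γ : Set (MSO A)} (hΓ : ∀ ψ ∈ Γ, ¬ ψ.FreeFO y)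
    {Ψ Ψ' : Step A R}
    (h : ∀ m : WVal A, SatAll Γ m →
      (CoreP.prod y Ψ).sem m = (CoreP.prod y Ψ').sem m) :
    CorePDeriv Γ (.prod y Ψ) (.prod y Ψ') := by
  refine CorePDeriv.c4 y hΓ (stepComplete Ψ Γ Ψ' ?_)
  intro m hm
  have := (prod_sem_eq_iff y Ψ Ψ' m).mp (h m hm) (m.fo y)
  rwa [WVal.updFO_self] at this

lemma sumProds_perm (y : ℕ) {Γ : Set (MSO A)} {K K' : List (Step A R)}
    (h : K.Perm K') : CorePDeriv Γ (sumProds y K) (sumProds y K') := by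
  induction h with
  | nil => exact .refl _ _
  | cons a _ ih =>
    rw [sumProds_cons, sumProds_cons]
    exact .congAdd (.refl _ _) ih
  | swap a b l =>
    rw [sumProds_cons, sumProds_cons, sumProds_cons, sumProds_cons]
    exact .trans (.symm (.c3 _ _ _ _))
      (.trans (.congAdd (.c2 _ _ _) (.refl _ _)) (.c3 _ _ _ _))
  | trans _ _ ih1 ih2 => exact .trans ih1 ih2

lemma sumProds_forall₂ (y : ℕ) {Γ : Set (MSO A)} {K K' : List (Step A R)}
    (h : List.Forall₂ (fun a b => CorePDeriv Γ (.prod y a) (.prod y b)) K K') :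
    CorePDeriv Γ (sumProds y K) (sumProds y K') := by
  induction h with
  | nil => exact .refl _ _
  | cons hd _ ih =>
    rw [sumProds_cons, sumProds_cons]
    exact .congAdd hd ih

lemma forall₂_imp_mem {α β : Type*} {r s : α → β → Prop} :
    ∀ {l₁ : List α} {l₂ : List β}, List.Forall₂ r l₁ l₂ →
      (∀ a ∈ l₁, ∀ b ∈ l₂, r a b → s a b) → List.Forall₂ s l₁ l₂ := by
  intro l₁ l₂ h
  induction h with
  | nil => intro _; exact .nil
  | cons hd _ ih =>
    intro hmem
    exact .cons (hmem _ (List.mem_cons_self) _ (List.mem_cons_self) hd)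
      (ih fun a ha b hb => hmem a (List.mem_cons_of_mem _ ha) b (List.mem_cons_of_mem _ hb))

lemma exists_align {α β γ : Type*} (f : α → γ) (g : β → γ) :
    ∀ (l₁ : List α) (l₂ : List β), (l₁.map f).Perm (l₂.map g) →
      ∃ l₂', l₂.Perm l₂' ∧ List.Forall₂ (fun a b => f a = g b) l₁ l₂' := by
  intro l₁
  induction l₁ with
  | nil =>
    intro l₂ h
    have h0 : l₂.map g = [] := h.symm.eq_nil
    rw [List.map_eq_nil_iff] at h0
    subst h0
    exact ⟨[], List.Perm.refl _, .nil⟩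
  | cons a t ih =>
    intro l₂ h
    have hmem : f a ∈ l₂.map g := h.subset (List.mem_cons_self)
    rw [List.mem_map] at hmem
    obtain ⟨b, hb, hgb⟩ := hmem
    obtain ⟨u, v, rfl⟩ := List.append_of_mem hb
    have hmid : ((u ++ b :: v).map g).Perm (g b :: (u ++ v).map g) := by
      rw [List.map_append, List.map_cons, List.map_append]
      exact List.perm_middle
    have h2 : (t.map f).Perm ((u ++ v).map g) := by
      have h3 := h.trans hmid
      rw [hgb] at h3
      exact h3.cons_inv
    obtain ⟨w, hw, hf⟩ := ih (u ++ v) h2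
    exact ⟨b :: w, List.perm_middle.trans (hw.cons b), .cons hgb.symm hf⟩

lemma mainAux [DecidableEq R] (y : ℕ) :
    ∀ (P : List (Step A R × Step A R)) (Γ : Set (MSO A)) (K₁ K₂ : List (Step A R)),
      (∀ ψ ∈ Γ, ¬ ψ.FreeFO y) →
      (∀ Ψ ∈ K₁, ∀ Ψ' ∈ K₂, (Ψ, Ψ') ∈ P ∨ Det y Γ Ψ Ψ') →
      CorePEquiv Γ (sumProds y K₁) (sumProds y K₂) →
      CorePDeriv Γ (sumProds y K₁) (sumProds y K₂) := by
  intro P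
  induction P with
  | nil =>
    intro Γ K₁ K₂ hΓ hdet hsem
    by_cases hc : ∃ m : WVal A, SatAll Γ m
    · obtain ⟨m₀, hm₀⟩ := hc
      have hs := hsem m₀ hm₀
      rw [sumProds_sem, sumProds_sem, Multiset.coe_eq_coe] at hs
      obtain ⟨K₂', hperm, hf⟩ := exists_align _ _ K₁ K₂ hs
      refine .trans (sumProds_forall₂ y ?_) (sumProds_perm y hperm.symm)
      refine forall₂_imp_mem hf ?_
      intro a ha b hb hab
      have hD : Det y Γ a b := by
        rcases hdet a ha b (hperm.mem_iff.mpr hb) with hP | hD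
        · exact absurd hP (List.not_mem_nil)
        · exact hD
      have hval : (CoreP.prod y a).sem m₀ = (CoreP.prod y b).sem m₀ := by
        simp only [CoreP.sem]
        exact congrArg (fun l => ({l} : Multiset (List R))) hab
      rcases hD with hD | hD
      · exact prodDeriv y hΓ hD
      · exact absurd hval (hD m₀ hm₀)
    · exact CorePDeriv.inconsistent (fun m hm => hc ⟨m, hm⟩) _ _
  | cons p P ih =>
    intro Γ K₁ K₂ hΓ hdet hsem
    obtain ⟨Ψa, Ψb⟩ := p
    apply CorePDeriv.split (psiEq y Ψa Ψb)
    · refine ih (insert (psiEq y Ψa Ψb) Γ) K₁ K₂ ?_ ?_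
        (fun m hm => hsem m (satAll_mono hm))
      · intro χ hχ
        rcases Set.mem_insert_iff.mp hχ with rfl | hχ
        · exact psiEq_not_free y Ψa Ψb
        · exact hΓ χ hχ
      · intro Ψ hΨ Ψ' hΨ'
        rcases hdet Ψ hΨ Ψ' hΨ' with hP | hD
        · rcases List.mem_cons.mp hP with heq | hP
          · right; left
            intro m hm
            obtain ⟨rfl, rfl⟩ := Prod.mk.injEq .. ▸ heq
            exact (prod_sem_eq_iff _ _ _ _).mpr
              ((psiEq_sat _ _ _ _).mp (satAll_insert_head hm))
          · exact Or.inl hP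
        · exact Or.inr hD.insert
    · refine ih (insert (.not (psiEq y Ψa Ψb)) Γ) K₁ K₂ ?_ ?_
        (fun m hm => hsem m (satAll_mono hm))
      · intro χ hχ
        rcases Set.mem_insert_iff.mp hχ with rfl | hχ
        · exact psiEq_not_free y Ψa Ψb
        · exact hΓ χ hχ
      · intro Ψ hΨ Ψ' hΨ'
        rcases hdet Ψ hΨ Ψ' hΨ' with hP | hD
        · rcases List.mem_cons.mp hP with heq | hP
          · right; right
            intro m hm hval
            obtain ⟨rfl, rfl⟩ := Prod.mk.injEq .. ▸ heq
            have hns : ¬ (psiEq y Ψ Ψ').Sat m := satAll_insert_head hm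
            exact hns ((psiEq_sat _ _ _ _).mpr ((prod_sem_eq_iff _ _ _ _).mp hval))
          · exact Or.inl hP
        · exact Or.inr hD.insert

/-! ### Freshness and renaming -/

/-- A bound on the first-order variables occurring in an MSO formula. -/
def MSO.fb : MSO A → ℕ
  | .top => 0
  | .pred _ z => z
  | .le z w => max z w
  | .mem z _ => z
  | .not φ => φ.fb
  | .and φ ψ => max φ.fb ψ.fb
  | .allFO z φ => max z φ.fb
  | .allSO _ φ => φ.fb

lemma MSO.occ_le_fb : ∀ (φ : MSO A) (z : ℕ), φ.OccFO z → z ≤ φ.fb := by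
  intro φ
  induction φ with
  | top => intro z h; exact h.elim
  | pred a w => intro z h; simp only [MSO.OccFO] at h; simp only [MSO.fb]; omega
  | le u v => intro z h; simp only [MSO.OccFO] at h; simp only [MSO.fb]; omega
  | mem u X => intro z h; simp only [MSO.OccFO] at h; simp only [MSO.fb]; omega
  | not φ ih => exact ih
  | and φ χ ih1 ih2 =>
    intro z h
    rcases h with h | h
    · exact le_trans (ih1 z h) (le_max_left _ _)
    · exact le_trans (ih2 z h) (le_max_right _ _)
  | allFO w φ ih =>
    intro z h
    rcases h with h | h
    · simp only [MSO.fb]; omega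
    · exact le_trans (ih z h) (le_max_right _ _)
  | allSO X φ ih => exact ih

lemma MSO.free_imp_occ : ∀ (φ : MSO A) (z : ℕ), φ.FreeFO z → φ.OccFO z := by
  intro φ
  induction φ with
  | top => intro z h; exact h.elim
  | pred a w => intro z h; exact h
  | le u v => intro z h; exact h
  | mem u X => intro z h; exact h
  | not φ ih => exact ih
  | and φ χ ih1 ih2 => intro z h; exact h.imp (ih1 z) (ih2 z)
  | allFO w φ ih => intro z h; exact Or.inr (ih z h.2)
  | allSO X φ ih => exact ih

/-- A bound on the first-order variables occurring in a step-wMSO formula. -/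
def Step.fb : Step A R → ℕ
  | .const _ => 0
  | .ite φ a b => max φ.fb (max a.fb b.fb)

lemma Step.occ_le_fb : ∀ (Ψ : Step A R) (z : ℕ), Ψ.OccFO z → z ≤ Ψ.fb := by
  intro Ψ
  induction Ψ with
  | const r => intro z h; exact h.elim
  | ite φ a b iha ihb =>
    intro z h
    rcases h with h | h | h
    · exact le_trans (MSO.occ_le_fb φ z h) (le_max_left _ _)
    · exact le_trans (iha z h) (le_trans (le_max_left _ _) (le_max_right _ _))
    · exact le_trans (ihb z h) (le_trans (le_max_right _ _) (le_max_right _ _))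

lemma le_foldr_max : ∀ (l : List ℕ) (a : ℕ), a ∈ l → a ≤ l.foldr max 0 := by
  intro l
  induction l with
  | nil => intro a h; exact absurd h (List.not_mem_nil)
  | cons b l ih =>
    intro a ha
    rcases List.mem_cons.mp ha with rfl | ha
    · exact le_max_left _ _
    · exact le_trans (ih a ha) (le_max_right _ _)

lemma renFO_sat (x y : ℕ) :
    ∀ (φ : MSO A) (w : List A) (hw : w ≠ []) (σ τ : ℕ → Fin w.length)
      (S : ℕ → Finset (Fin w.length)),
      ¬ φ.OccFO y → (∀ z, z ≠ y → τ (rn x y z) = σ z) →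
      ((φ.renFO x y).Sat ⟨w, hw, τ, S⟩ ↔ φ.Sat ⟨w, hw, σ, S⟩) := by
  intro φ
  induction φ with
  | top => intro w hw σ τ S hocc H; simp [MSO.renFO, MSO.Sat]
  | pred a z =>
    intro w hw σ τ S hocc H
    have hz : z ≠ y := fun h => hocc h
    show w.get (τ (rn x y z)) = a ↔ w.get (σ z) = a
    rw [H z hz]
  | le z u =>
    intro w hw σ τ S hocc H
    have hz : z ≠ y ∧ u ≠ y := by
      constructor <;> intro h <;> exact hocc (by simp [MSO.OccFO, h])
    show (τ (rn x y z) : ℕ) ≤ (τ (rn x y u) : ℕ) ↔ (σ z : ℕ) ≤ (σ u : ℕ)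
    rw [H z hz.1, H u hz.2]
  | mem z X =>
    intro w hw σ τ S hocc H
    have hz : z ≠ y := fun h => hocc h
    show τ (rn x y z) ∈ S X ↔ σ z ∈ S X
    rw [H z hz]
  | not φ ih =>
    intro w hw σ τ S hocc H
    show ¬ _ ↔ ¬ _
    rw [ih w hw σ τ S hocc H]
  | and φ χ ih1 ih2 =>
    intro w hw σ τ S hocc H
    have h1 : ¬ φ.OccFO y := fun h => hocc (Or.inl h)
    have h2 : ¬ χ.OccFO y := fun h => hocc (Or.inr h)
    show _ ∧ _ ↔ _ ∧ _
    rw [ih1 w hw σ τ S h1 H, ih2 w hw σ τ S h2 H]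
  | allFO z φ ih =>
    intro w hw σ τ S hocc H
    have hz : z ≠ y := fun h => hocc (Or.inl h)
    have hφ : ¬ φ.OccFO y := fun h => hocc (Or.inr h)
    show (∀ i, (φ.renFO x y).Sat ⟨w, hw, Function.update τ (rn x y z) i, S⟩) ↔
      ∀ i, φ.Sat ⟨w, hw, Function.update σ z i, S⟩
    refine forall_congr' fun i => ?_
    refine ih w hw _ _ S hφ ?_
    intro u hu
    by_cases huz : u = z
    · subst huz
      rw [Function.update_self, Function.update_self]
    · have hne : rn x y u ≠ rn x y z := by
        unfold rn
        split_ifs <;> omega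
      rw [Function.update_of_ne hne, Function.update_of_ne huz]
      exact H u hu
  | allSO X φ ih =>
    intro w hw σ τ S hocc H
    show (∀ I, (φ.renFO x y).Sat ⟨w, hw, τ, Function.update S X I⟩) ↔
      ∀ I, φ.Sat ⟨w, hw, σ, Function.update S X I⟩
    exact forall_congr' fun I => ih w hw σ τ _ hocc H

lemma Step.renFO_sem (x y : ℕ) :
    ∀ (Ψ : Step A R) (w : List A) (hw : w ≠ []) (σ τ : ℕ → Fin w.length)
      (S : ℕ → Finset (Fin w.length)),
      ¬ Ψ.OccFO y → (∀ z, z ≠ y → τ (rn x y z) = σ z) →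
      (Ψ.renFO x y).sem ⟨w, hw, τ, S⟩ = Ψ.sem ⟨w, hw, σ, S⟩ := by
  intro Ψ
  induction Ψ with
  | const r => intros; rfl
  | ite φ a b iha ihb =>
    intro w hw σ τ S hocc H
    have h0 : ¬ φ.OccFO y := fun h => hocc (Or.inl h)
    have h1 : ¬ a.OccFO y := fun h => hocc (Or.inr (Or.inl h))
    have h2 : ¬ b.OccFO y := fun h => hocc (Or.inr (Or.inr h))
    simp only [Step.renFO, Step.sem]
    rw [renFO_sat x y φ w hw σ τ S h0 H]
    by_cases h : φ.Sat ⟨w, hw, σ, S⟩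
    · rw [if_pos h, if_pos h]; exact iha w hw σ τ S h1 H
    · rw [if_neg h, if_neg h]; exact ihb w hw σ τ S h2 H

lemma prod_renFO_sem (x y : ℕ) (Ψ : Step A R) (h : ¬ Ψ.OccFO y) (m : WVal A) :
    (CoreP.prod y (Ψ.renFO x y)).sem m = (CoreP.prod x Ψ).sem m := by
  obtain ⟨w, hw, σ, S⟩ := m
  simp only [CoreP.sem]
  congr 1
  refine congrArg List.ofFn (funext fun i => ?_)
  show (Ψ.renFO x y).sem ⟨w, hw, Function.update σ y i, S⟩
      = Ψ.sem ⟨w, hw, Function.update σ x i, S⟩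
  refine Step.renFO_sem x y Ψ w hw _ _ S h ?_
  intro z hz
  by_cases hzx : z = x
  · have h1 : rn x y z = y := by simp [rn, hzx]
    rw [h1, hzx, Function.update_self, Function.update_self]
  · have : rn x y z = z := by simp [rn, hzx]
    rw [this, Function.update_of_ne hz, Function.update_of_ne hzx]

lemma sumProds_renFO_deriv (x y : ℕ) {Γ : Set (MSO A)} :
    ∀ (L : List (Step A R)), (∀ Ψ ∈ L, ¬ Ψ.OccFO y) →
      CorePDeriv Γ (sumProds x L) (sumProds y (L.map (Step.renFO x y))) := by
  intro L
  induction L with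
  | nil => intro _; exact .refl _ _
  | cons a L ih =>
    intro h
    rw [List.map_cons, sumProds_cons, sumProds_cons]
    exact .congAdd (.c5 Γ x y a (h a (List.mem_cons_self)))
      (ih fun Ψ hΨ => h Ψ (List.mem_cons_of_mem _ hΨ))

lemma sumProds_renFO_sem (x y : ℕ) :
    ∀ (L : List (Step A R)), (∀ Ψ ∈ L, ¬ Ψ.OccFO y) → ∀ (m : WVal A),
      (sumProds y (L.map (Step.renFO x y))).sem m = (sumProds x L).sem m := by
  intro L
  induction L with
  | nil => intro _ m; rfl
  | cons a L ih =>
    intro h m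
    rw [List.map_cons, sumProds_cons, sumProds_cons]
    show (CoreP.prod y (a.renFO x y)).sem m + _ = (CoreP.prod x a).sem m + _
    rw [prod_renFO_sem x y a (h a (List.mem_cons_self)) m,
      ih (fun Ψ hΨ => h Ψ (List.mem_cons_of_mem _ hΨ)) m]

end Aux


/-- Let `Γ` be finite, `Φ₁ = ∑_{i=1}^k ∏_x Ψ_i` and
`Φ₂ = ∑_{j=1}^k ∏_x Ψ'_j` with `Φ₁ ∼_Γ Φ₂`, and assume that for all `i`, `j`,
`∏_x Ψ_i ∼_Γ ∏_x Ψ'_j` implies `Γ ⊢ ∏_x Ψ_i ≈ ∏_x Ψ'_j` derivable. Then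
`Γ ⊢ Φ₁ ≈ Φ₂` is derivable. -/
theorem statement14 {A R : Type} [Fintype A] [DecidableEq R]
    (Γ : Set (MSO A)) (hfin : Γ.Finite) (x : ℕ)
    (L₁ L₂ : List (Step A R)) (hlen : L₁.length = L₂.length)
    (hsem : CorePEquiv Γ (sumProds x L₁) (sumProds x L₂))
    (hpair : ∀ Ψ ∈ L₁, ∀ Ψ' ∈ L₂,
      CorePEquiv Γ (.prod x Ψ) (.prod x Ψ') →
        CorePDeriv Γ (CoreP.prod x Ψ) (CoreP.prod x Ψ')) :
    CorePDeriv Γ (sumProds x L₁) (sumProds x L₂) := by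
  classical
  set y := Nat.succ (max (hfin.toFinset.sup MSO.fb) (((L₁ ++ L₂).map Step.fb).foldr max 0)) with hy
  have hΓfree : ∀ ψ ∈ Γ, ¬ ψ.FreeFO y := by
    intro ψ hψ hfree
    have h1 : y ≤ ψ.fb := MSO.occ_le_fb ψ y (MSO.free_imp_occ ψ y hfree)
    have h2 : ψ.fb ≤ hfin.toFinset.sup MSO.fb :=
      Finset.le_sup (hfin.mem_toFinset.mpr hψ)
    omega
  have hLfree : ∀ Ψ ∈ L₁ ++ L₂, ¬ Ψ.OccFO y := by
    intro Ψ hΨ hocc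
    have h1 : y ≤ Ψ.fb := Step.occ_le_fb Ψ y hocc
    have h2 : Ψ.fb ≤ ((L₁ ++ L₂).map Step.fb).foldr max 0 :=
      le_foldr_max _ _ (List.mem_map_of_mem hΨ)
    omega
  have hL1 : ∀ Ψ ∈ L₁, ¬ Ψ.OccFO y := fun Ψ h => hLfree Ψ (List.mem_append_left _ h)
  have hL2 : ∀ Ψ ∈ L₂, ¬ Ψ.OccFO y := fun Ψ h => hLfree Ψ (List.mem_append_right _ h)
  have d1 := sumProds_renFO_deriv x y (Γ := Γ) L₁ hL1
  have d2 := sumProds_renFO_deriv x y (Γ := Γ) L₂ hL2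
  have hsem' : CorePEquiv Γ (sumProds y (L₁.map (Step.renFO x y)))
      (sumProds y (L₂.map (Step.renFO x y))) := by
    intro m hm
    rw [sumProds_renFO_sem x y L₁ hL1 m, sumProds_renFO_sem x y L₂ hL2 m]
    exact hsem m hm
  have main : CorePDeriv Γ (sumProds y (L₁.map (Step.renFO x y)))
      (sumProds y (L₂.map (Step.renFO x y))) := by
    refine mainAux y ((L₁.map (Step.renFO x y)).product (L₂.map (Step.renFO x y)))
      Γ _ _ hΓfree ?_ hsem'
    intro Ψ hΨ Ψ' hΨ'
    exact Or.inl (List.pair_mem_product.mpr ⟨hΨ, hΨ'⟩)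
  exact .trans d1 (.trans main (.symm d2))

end WMSO
end

section
/- Let Φ₁, Φ₂, Φ₁', Φ₂' be core-wMSO formulas such that the set of weights occurring in Φ₁ or Φ₂ is disjoint from the set of weights occurring in Φ₁' or Φ₂'. Then for every (w,σ) ∈ Σ⁺_val: ⟦Φ₁⟧(w,σ) = ⟦Φ₂⟧(w,σ) and ⟦Φ₁'⟧(w,σ) = ⟦Φ₂'⟧(w,σ) if and only if ⟦Φ₁+Φ₁'⟧(w,σ) = ⟦Φ₂+Φ₂'⟧(w,σ). -/
namespace WMSO

variable {A R : Type}

lemma step_sem_mem_weights {A R : Type} [DecidableEq R] (Ψ : Step A R) (m : WVal A) :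
    Ψ.sem m ∈ Ψ.weights := by
  induction Ψ with
  | const r => simp [Step.sem, Step.weights]
  | ite φ Ψ₁ Ψ₂ ih₁ ih₂ =>
    simp only [Step.sem, Step.weights, Finset.mem_union]
    split
    · exact Or.inl ih₁
    · exact Or.inr ih₂

lemma core_sem_mem {A R : Type} [DecidableEq R] (Φ : Core A R) (m : WVal A)
    (l : List R) (hl : l ∈ Φ.sem m) : l ≠ [] ∧ ∀ r ∈ l, r ∈ Φ.weights := by
  induction Φ generalizing m with
  | zero => simp [Core.sem] at hl
  | prod x Ψ =>
    simp only [Core.sem, Multiset.mem_singleton] at hl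
    subst hl
    constructor
    · have hlen : m.word.length ≠ 0 := by
        simpa using m.nonempty
      intro hnil
      apply hlen
      simpa using congrArg List.length hnil
    · intro r hr
      rw [List.mem_ofFn] at hr
      obtain ⟨i, rfl⟩ := hr
      exact step_sem_mem_weights Ψ _
  | ite φ Φ₁ Φ₂ ih₁ ih₂ =>
    simp only [Core.sem] at hl
    split at hl
    · obtain ⟨h1, h2⟩ := ih₁ m hl
      exact ⟨h1, fun r hr => Finset.mem_union_left _ (h2 r hr)⟩
    · obtain ⟨h1, h2⟩ := ih₂ m hl
      exact ⟨h1, fun r hr => Finset.mem_union_right _ (h2 r hr)⟩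
  | add Φ₁ Φ₂ ih₁ ih₂ =>
    simp only [Core.sem, Multiset.mem_add] at hl
    rcases hl with hl | hl
    · obtain ⟨h1, h2⟩ := ih₁ m hl
      exact ⟨h1, fun r hr => Finset.mem_union_left _ (h2 r hr)⟩
    · obtain ⟨h1, h2⟩ := ih₂ m hl
      exact ⟨h1, fun r hr => Finset.mem_union_right _ (h2 r hr)⟩
  | sumFO x Φ ih =>
    simp only [Core.sem] at hl
    rw [Multiset.mem_sum] at hl
    obtain ⟨i, _, hi⟩ := hl
    exact ih _ hi
  | sumSO X Φ ih =>
    simp only [Core.sem] at hl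
    rw [Multiset.mem_sum] at hl
    obtain ⟨I, _, hI⟩ := hl
    exact ih _ hI

/-- Let `Φ₁, Φ₂, Φ₁', Φ₂'` be core-wMSO formulas such that
the weights occurring in `Φ₁` or `Φ₂` are disjoint from those occurring in
`Φ₁'` or `Φ₂'`. Then for every `(w,σ) ∈ Σ⁺_val`:
`⟦Φ₁⟧(w,σ) = ⟦Φ₂⟧(w,σ)` and `⟦Φ₁'⟧(w,σ) = ⟦Φ₂'⟧(w,σ)` iff
`⟦Φ₁+Φ₁'⟧(w,σ) = ⟦Φ₂+Φ₂'⟧(w,σ)`. -/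
theorem statement17 {A R : Type} [Fintype A] [DecidableEq R]
    (Φ₁ Φ₂ Φ₁' Φ₂' : Core A R)
    (hdisj : Disjoint (Φ₁.weights ∪ Φ₂.weights) (Φ₁'.weights ∪ Φ₂'.weights))
    (m : WVal A) :
    (Φ₁.sem m = Φ₂.sem m ∧ Φ₁'.sem m = Φ₂'.sem m) ↔
      (Φ₁.add Φ₁').sem m = (Φ₂.add Φ₂').sem m := by
  classical
  constructor
  · rintro ⟨h1, h2⟩
    simp [Core.sem, h1, h2]
  · intro h
    simp only [Core.sem] at h
    set S := Φ₁.weights ∪ Φ₂.weights with hS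
    have key : ∀ (Φ : Core A R), Φ.weights ⊆ S →
        Multiset.filter (fun l => ∀ r ∈ l, r ∈ S) (Φ.sem m) = Φ.sem m := by
      intro Φ hsub
      apply Multiset.filter_eq_self.mpr
      intro l hl r hr
      exact hsub ((core_sem_mem Φ m l hl).2 r hr)
    have key' : ∀ (Φ : Core A R), Φ.weights ⊆ Φ₁'.weights ∪ Φ₂'.weights →
        Multiset.filter (fun l => ∀ r ∈ l, r ∈ S) (Φ.sem m) = 0 := by
      intro Φ hsub
      rw [Multiset.filter_eq_nil]
      intro l hl hall
      obtain ⟨hne, hmem⟩ := core_sem_mem Φ m l hl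
      obtain ⟨r, hr⟩ := List.exists_mem_of_ne_nil l hne
      exact (Finset.disjoint_left.mp hdisj (hall r hr)) (hsub (hmem r hr))
    have hfilter := congrArg (Multiset.filter (fun l => ∀ r ∈ l, r ∈ S)) h
    rw [Multiset.filter_add, Multiset.filter_add,
        key Φ₁ Finset.subset_union_left, key Φ₂ Finset.subset_union_right,
        key' Φ₁' Finset.subset_union_left, key' Φ₂' Finset.subset_union_right,
        add_zero, add_zero] at hfilter
    refine ⟨hfilter, ?_⟩
    rw [hfilter] at h
    exact add_left_cancel h

end WMSO
end
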